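/- A reductive closed subgroup G ≤ GL_n admits a graded polynomial representation theory (i.e. the sum Σ_{d≥0} A(G,d) of the spaces of degree-d polynomial functions on G is direct) if and only if the vanishing ideal I(M_G) of the Zariski closure M_G of G in the matrix monoid M_n is a homogeneous ideal of k[x_{ij}]. -/
import Mathlib


open Matrix

/-- The restriction map sending a polynomial in the matrix entries to the function it defines
on a subgroup `G ≤ GL_n(k)` (equivalently, on the Zariski closure `M_G` of `G` in the matrix
monoid, since `G` is dense in `M_G`). -/
noncomputable def restrictionMap {k : Type*} [Field k] {n : ℕ} (G : Subgroup (GL (Fin n) k)) :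
    MvPolynomial (Fin n × Fin n) k →ₐ[k] (G → k) :=
  MvPolynomial.aeval
    (fun p : Fin n × Fin n => fun g : G =>
      ((g : GL (Fin n) k) : Matrix (Fin n) (Fin n) k) p.1 p.2)

/-- A (reductive closed) subgroup `G ≤ GL_n(k)` (`k` of characteristic zero)
admits a graded polynomial representation theory — the sum `Σ_{d≥0} A(G,d)` of the spaces of
restrictions to `G` of homogeneous degree-`d` polynomials is direct — if and only if the
vanishing ideal `I(M_G)` of (the closure of) `G` in the matrix monoid, namely the kernel of the
restriction map, is a homogeneous ideal of `k[x_{ij}]`: it contains all homogeneous components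
of each of its elements. -/
theorem stmt10 {k : Type*} [Field k] [CharZero k] {n : ℕ} (G : Subgroup (GL (Fin n) k)) :
    (∀ (s : Finset ℕ) (f : ℕ → MvPolynomial (Fin n × Fin n) k),
      (∀ d ∈ s, (f d).IsHomogeneous d) →
      (∑ d ∈ s, restrictionMap G (f d)) = 0 →
      ∀ d ∈ s, restrictionMap G (f d) = 0) ↔
    (∀ p ∈ RingHom.ker (restrictionMap G).toRingHom, ∀ d : ℕ,
      MvPolynomial.homogeneousComponent d p ∈ RingHom.ker (restrictionMap G).toRingHom) := by
  constructor
  · intro H p hp d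
    rw [RingHom.mem_ker] at hp ⊢
    by_cases hd : d < p.totalDegree + 1
    · exact H (Finset.range (p.totalDegree + 1))
        (fun e => MvPolynomial.homogeneousComponent e p)
        (fun e _ => MvPolynomial.homogeneousComponent_isHomogeneous e p)
        (by rw [← map_sum, MvPolynomial.sum_homogeneousComponent]; exact hp)
        d (Finset.mem_range.mpr hd)
    · rw [MvPolynomial.homogeneousComponent_eq_zero _ _ (by omega), map_zero]
  · intro H s f hf hsum d hd
    have hp : (∑ e ∈ s, f e) ∈ RingHom.ker (restrictionMap G).toRingHom := by
      rw [RingHom.mem_ker]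
      show restrictionMap G (∑ e ∈ s, f e) = 0
      rw [map_sum]; exact hsum
    have h2 := H _ hp d
    rw [RingHom.mem_ker] at h2
    have heq : MvPolynomial.homogeneousComponent d (∑ e ∈ s, f e) = f d := by
      rw [map_sum, Finset.sum_eq_single d]
      · rw [MvPolynomial.homogeneousComponent_of_mem
          ((MvPolynomial.mem_homogeneousSubmodule _ _).mpr (hf d hd))]
        simp
      · intro e he hne
        rw [MvPolynomial.homogeneousComponent_of_mem
          ((MvPolynomial.mem_homogeneousSubmodule _ _).mpr (hf e he))]
        simp [Ne.symm hne]
      · intro h; exact absurd hd h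
    rw [heq] at h2
    exact h2
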